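/- arXiv:2104.13098 — 3 statements merged into one kernel-verified Lean document; each statement's English description precedes it below -/
import Mathlib

section
/- Let k and ℓ be integers with 1 ≤ k ≤ ℓ, let m_1, …, m_ℓ be nonnegative real numbers, and let o_1, …, o_{ℓ−1} be real numbers. Assume: (a) for every j with 1 ≤ j ≤ k, m_1 + ⋯ + m_j ≥ o_1 + ⋯ + o_{j−1}; (b) for every i with 1 ≤ i ≤ ℓ−k+1, m_i + m_{i+1} + ⋯ + m_{i+k−1} ≥ o_i + o_{i+1} + ⋯ + o_{i+k−2}; and (c) for every i with ℓ−k+2 ≤ i ≤ ℓ, m_i + m_{i+1} + ⋯ + m_ℓ ≥ o_i + o_{i+1} + ⋯ + o_{ℓ−1}. Then k·(m_1 + ⋯ + m_ℓ) ≥ (k−1)·(o_1 + ⋯ + o_{ℓ−1}). -/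
/-!
Index the hypotheses by the right end `s ∈ [1, ℓ + k - 1]` of a window of length `k`: the `s`-th
hypothesis compares the sum of `o` over `[s - k + 1, s - 1] ∩ [1, ℓ - 1]` with the sum of `m` over
`[s - k + 1, s] ∩ [1, ℓ]`, (a), (b), (c) being the cases `s < k`, `k ≤ s ≤ ℓ`, `ℓ < s`. Summing
all of them, every `m t` is counted `k` times and every `o t` is counted `k - 1` times.
-/

open Finset

theorem sum_sum_eq_nsmul_sum_of_card_filter {ι α M : Type*} [DecidableEq α] [AddCommMonoid M]
    (S : Finset ι) (T : Finset α) (W : ι → Finset α) (c : ℕ) (f : α → M)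
    (hW : ∀ s ∈ S, W s ⊆ T) (hc : ∀ t ∈ T, #{s ∈ S | t ∈ W s} = c) :
    ∑ s ∈ S, ∑ t ∈ W s, f t = c • ∑ t ∈ T, f t := by
  rw [sum_comm' (t' := T) (s' := fun t => {s ∈ S | t ∈ W s})
    (fun s t => by simpa using fun hs ht => hW s hs ht), smul_sum]
  exact sum_congr rfl fun t ht => by rw [sum_const, hc t ht]

theorem window_ineq_path_general (k ℓ : ℕ) (hk : 1 ≤ k) (hkl : k ≤ ℓ)
    (m o : ℕ → ℝ)
    (ha : ∀ j, 1 ≤ j → j ≤ k →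
      ∑ i ∈ Icc 1 (j - 1), o i ≤ ∑ i ∈ Icc 1 j, m i)
    (hb : ∀ i, 1 ≤ i → i ≤ ℓ - k + 1 →
      ∑ t ∈ Icc i (i + k - 2), o t ≤ ∑ t ∈ Icc i (i + k - 1), m t)
    (hc : ∀ i, ℓ - k + 2 ≤ i → i ≤ ℓ →
      ∑ t ∈ Icc i (ℓ - 1), o t ≤ ∑ t ∈ Icc i ℓ, m t) :
    ((k : ℝ) - 1) * ∑ i ∈ Icc 1 (ℓ - 1), o i ≤ (k : ℝ) * ∑ i ∈ Icc 1 ℓ, m i := by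
  have hwindow : ∀ s ∈ Icc 1 (ℓ + k - 1),
      ∑ t ∈ Icc (s - k + 1) (min (s - 1) (ℓ - 1)), o t ≤ ∑ t ∈ Icc (s - k + 1) (min s ℓ), m t := by
    intro s hs
    rw [mem_Icc] at hs
    rcases lt_or_ge s k with hsk | hks
    · convert ha s hs.1 hsk.le using 3 <;> omega
    rcases le_or_gt s ℓ with hsl | hls
    · convert hb (s - k + 1) (by omega) (by omega) using 3 <;> omega
    · convert hc (s - k + 1) (by omega) (by omega) using 3 <;> omega
  have ho_total := sum_sum_eq_nsmul_sum_of_card_filter (Icc 1 (ℓ + k - 1)) (Icc 1 (ℓ - 1))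
    (fun s => Icc (s - k + 1) (min (s - 1) (ℓ - 1))) (k - 1) o
    (fun s hs => Icc_subset_Icc (by rw [mem_Icc] at hs; omega) (by omega)) (fun t ht => by
      rw [mem_Icc] at ht
      rw [show {s ∈ Icc 1 (ℓ + k - 1) | t ∈ Icc (s - k + 1) (min (s - 1) (ℓ - 1))}
        = Icc (t + 1) (t + k - 1) by ext s; simp only [mem_filter, mem_Icc]; omega]
      simp only [Nat.card_Icc]; omega)
  have hm_total := sum_sum_eq_nsmul_sum_of_card_filter (Icc 1 (ℓ + k - 1)) (Icc 1 ℓ)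
    (fun s => Icc (s - k + 1) (min s ℓ)) k m
    (fun s hs => Icc_subset_Icc (by rw [mem_Icc] at hs; omega) (by omega)) (fun t ht => by
      rw [mem_Icc] at ht
      rw [show {s ∈ Icc 1 (ℓ + k - 1) | t ∈ Icc (s - k + 1) (min s ℓ)}
        = Icc t (t + k - 1) by ext s; simp only [mem_filter, mem_Icc]; omega]
      simp only [Nat.card_Icc]; omega)
  rw [nsmul_eq_mul, Nat.cast_sub hk, Nat.cast_one] at ho_total
  rw [nsmul_eq_mul] at hm_total
  rw [← ho_total, ← hm_total]
  exact sum_le_sum hwindow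

/-- Summation inequality used for weight-augmenting path analysis on path components:
from the three families of `k`-window inequalities (prefix, sliding, suffix) one gets
`k·(m_1 + ⋯ + m_ℓ) ≥ (k-1)·(o_1 + ⋯ + o_{ℓ-1})`. -/
theorem window_ineq_path (k ℓ : ℕ) (hk : 1 ≤ k) (hkl : k ≤ ℓ)
    (m o : ℕ → ℝ) (hm : ∀ i, 1 ≤ i → i ≤ ℓ → 0 ≤ m i)
    (ha : ∀ j, 1 ≤ j → j ≤ k →
      ∑ i ∈ Icc 1 (j - 1), o i ≤ ∑ i ∈ Icc 1 j, m i)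
    (hb : ∀ i, 1 ≤ i → i ≤ ℓ - k + 1 →
      ∑ t ∈ Icc i (i + k - 2), o t ≤ ∑ t ∈ Icc i (i + k - 1), m t)
    (hc : ∀ i, ℓ - k + 2 ≤ i → i ≤ ℓ →
      ∑ t ∈ Icc i (ℓ - 1), o t ≤ ∑ t ∈ Icc i ℓ, m t) :
    ((k : ℝ) - 1) * ∑ i ∈ Icc 1 (ℓ - 1), o i ≤ (k : ℝ) * ∑ i ∈ Icc 1 ℓ, m i :=
  window_ineq_path_general k ℓ hk hkl m o ha hb hc
end

section
/- Let G = (V,E) be a finite simple undirected graph with nonnegative edge weights w, let v ∈ V be a vertex of degree 1 whose unique incident edge is e = {u,v} with w(e) = 0, and let M be a matching in G with e ∉ M that covers neither u nor v. Let M' = M ∪ {e}, which is again a matching. Then for every integer k ≥ 1: if there exists a weight-augmenting k-path with respect to M', then there also exists a weight-augmenting k-path with respect to M. (Indeed, any weight-augmenting k-path for M' either avoids e and is itself a weight-augmenting k-path for M, or contains e and becomes one after deleting e.) -/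
/-!
A path through the pendant edge `e = s(u, v)` must end at `v`, because an interior vertex of a
path has two distinct neighbours on it; after reversing, `e` is its first edge. Since `e` lies in
`M ∪ {e}`, dropping it keeps the path alternating, keeps its edges outside the matching and, as
`w e = 0`, does not decrease the gain. The rest of the path avoids `e`, so it is augmenting for
`M` as well. A path avoiding `e` cannot tell `M` and `M ∪ {e}` apart.
-/

/-- `M` is a matching in the simple graph `G`: a set of edges of `G` that are
pairwise vertex-disjoint. -/
def EdgeMatching {V : Type*} [DecidableEq V] (G : SimpleGraph V)
    (M : Finset (Sym2 V)) : Prop :=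
  (∀ e ∈ M, e ∈ G.edgeSet) ∧
    ∀ e ∈ M, ∀ f ∈ M, e ≠ f → ∀ v : V, ¬(v ∈ e ∧ v ∈ f)

/-- The weight of a finite set of edges. -/
noncomputable def wsum {V : Type*} (w : Sym2 V → ℝ) (F : Finset (Sym2 V)) : ℝ :=
  ∑ e ∈ F, w e

/-- `p` is an alternating path with respect to the matching `M`: a cycle-free path
such that of any two consecutive edges, exactly one belongs to `M`. -/
def IsAltPath {V : Type*} [DecidableEq V] {G : SimpleGraph V}
    (M : Finset (Sym2 V)) {u v : V} (p : G.Walk u v) : Prop :=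
  p.IsPath ∧ ∀ (i : ℕ) (h : i + 1 < p.edges.length),
    ((p.edges[i]'(Nat.lt_of_succ_lt h)) ∈ M ↔ (p.edges[i+1]'h) ∉ M)

/-- `p` is a weight-augmenting `k`-path with respect to `M`: an alternating path with
exactly `k` edges outside `M` whose edges outside `M` weigh more than its edges in `M`. -/
def IsWeightAugKPath {V : Type*} [DecidableEq V] {G : SimpleGraph V}
    (w : Sym2 V → ℝ) (M : Finset (Sym2 V)) (k : ℕ) {u v : V} (p : G.Walk u v) : Prop :=
  IsAltPath M p ∧ (p.edges.filter (fun e => e ∉ M)).length = k ∧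
    ((p.edges.filter (fun e => e ∈ M)).map w).sum <
      ((p.edges.filter (fun e => e ∉ M)).map w).sum

/-- `M` is a maximum weight matching of `G`. -/
def IsMaxWeightMatching {V : Type*} [DecidableEq V] (G : SimpleGraph V)
    (w : Sym2 V → ℝ) (M : Finset (Sym2 V)) : Prop :=
  EdgeMatching G M ∧ ∀ M' : Finset (Sym2 V), EdgeMatching G M' → wsum w M' ≤ wsum w M

open SimpleGraph

section

variable {V : Type*} [DecidableEq V] {G : SimpleGraph V} {w : Sym2 V → ℝ} {M : Finset (Sym2 V)}
  {k : ℕ}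

theorem SimpleGraph.Walk.IsPath.eq_start_or_eq_end_of_neighborSet_subsingleton {a b v : V}
    {p : G.Walk a b} (hp : p.IsPath) (hv : v ∈ p.support)
    (hsub : (G.neighborSet v).Subsingleton) : v = a ∨ v = b := by
  obtain ⟨i, rfl, hi⟩ := Walk.mem_support_iff_exists_getVert.mp hv
  by_contra! hend
  have hi0 : i ≠ 0 := by rintro rfl; exact hend.1 p.getVert_zero
  have hlt : i < p.length := lt_of_le_of_ne hi (by rintro rfl; exact hend.2 p.getVert_length)
  have htwo := hp.ncard_neighborSet_toSubgraph_internal_eq_two hi0 hlt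
  obtain ⟨x, y, hxy, hpair⟩ := Set.ncard_eq_two.mp htwo
  exact hxy (hsub.anti (p.toSubgraph.neighborSet_subset _) (by simp [hpair]) (by simp [hpair]))

theorem EdgeMatching.insert {e : Sym2 V} (hM : EdgeMatching G M)
    (he : e ∈ G.edgeSet) (hfree : ∀ f ∈ M, ∀ x ∈ e, x ∉ f) : EdgeMatching G (insert e M) := by
  refine ⟨fun f hf => ?_, fun f hf g hg hfg x hx => ?_⟩
  · rcases Finset.mem_insert.mp hf with rfl | hf
    exacts [he, hM.1 f hf]
  · rcases Finset.mem_insert.mp hf with rfl | hf <;> rcases Finset.mem_insert.mp hg with hge | hg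
    · exact hfg hge.symm
    · exact hfree g hg x hx.1 hx.2
    · exact hfree f hf x (hge ▸ hx.2) hx.1
    · exact hM.2 f hf g hg hfg x hx

theorem isAltPath_iff_isChain {a b : V} (p : G.Walk a b) :
    IsAltPath M p ↔ p.IsPath ∧ p.edges.IsChain (fun e f => e ∈ M ↔ f ∉ M) := by
  rw [IsAltPath, List.isChain_iff_getElem]

theorem isWeightAugKPath_congr {M' : Finset (Sym2 V)} {a b : V} (p : G.Walk a b)
    (h : ∀ f ∈ p.edges, f ∈ M ↔ f ∈ M') :
    IsWeightAugKPath w M k p ↔ IsWeightAugKPath w M' k p := by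
  have hin : p.edges.filter (fun e => e ∈ M) = p.edges.filter (fun e => e ∈ M') :=
    List.filter_congr fun f hf => by simp [h f hf]
  have hout : p.edges.filter (fun e => e ∉ M) = p.edges.filter (fun e => e ∉ M') :=
    List.filter_congr fun f hf => by simp [h f hf]
  have hchain : p.edges.IsChain (fun e f => e ∈ M ↔ f ∉ M) ↔
      p.edges.IsChain (fun e f => e ∈ M' ↔ f ∉ M') :=
    List.IsChain.iff_of_mem_imp fun e f he hf => by rw [h e he, h f hf]
  rw [IsWeightAugKPath, IsWeightAugKPath, isAltPath_iff_isChain, isAltPath_iff_isChain, hin,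
    hout, hchain]

theorem IsWeightAugKPath.reverse {a b : V} {p : G.Walk a b} (h : IsWeightAugKPath w M k p) :
    IsWeightAugKPath w M k p.reverse := by
  obtain ⟨halt, hk, hsum⟩ := h
  rw [isAltPath_iff_isChain] at halt
  refine ⟨(isAltPath_iff_isChain _).mpr ⟨halt.1.reverse, ?_⟩, ?_, ?_⟩
  · rw [Walk.edges_reverse, List.isChain_reverse]
    exact halt.2.imp fun e f => by tauto
  · simpa [List.filter_reverse] using hk
  · simpa [List.filter_reverse, List.sum_reverse] using hsum

theorem IsWeightAugKPath.of_cons {a c b : V} {hac : G.Adj a c} {q : G.Walk c b}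
    (h : IsWeightAugKPath w M k (Walk.cons hac q)) (hM : s(a, c) ∈ M) (hw : 0 ≤ w s(a, c)) :
    IsWeightAugKPath w M k q := by
  obtain ⟨halt, hk, hsum⟩ := h
  rw [isAltPath_iff_isChain, Walk.cons_isPath_iff] at halt
  refine ⟨(isAltPath_iff_isChain q).mpr ⟨halt.1.1, halt.2.tail⟩, ?_, ?_⟩
  · simpa [List.filter_cons, hM] using hk
  · simp [hM] at hsum ⊢
    linarith

theorem IsWeightAugKPath.exists_of_insert_pendant {u v b : V} (hdeg : ∀ x, G.Adj v x → x = u)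
    (hw : 0 ≤ w s(u, v)) {p : G.Walk v b} (hp : IsWeightAugKPath w (insert s(u, v) M) k p) :
    ∃ q : G.Walk u b, IsWeightAugKPath w M k q := by
  cases p with
  | nil => simp [IsWeightAugKPath] at hp
  | @cons _ c _ hvc q =>
    obtain rfl : c = u := hdeg _ hvc
    have he : s(v, c) = s(c, v) := Sym2.eq_swap
    have hq := hp.of_cons (by simp [he]) (by rwa [he])
    have hnot : s(c, v) ∉ q.edges := by
      have hnodup := hp.1.1.edges_nodup
      rw [Walk.edges_cons, List.nodup_cons, he] at hnodup
      exact hnodup.1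
    exact ⟨q, (isWeightAugKPath_congr q fun f hf =>
      by rw [Finset.mem_insert, or_iff_right (ne_of_mem_of_not_mem hf hnot)]).mp hq⟩

end

theorem zero_weight_pendant_edge_aug_path_general {V : Type*} [DecidableEq V]
    (G : SimpleGraph V) (w : Sym2 V → ℝ)
    (u v : V) (hadj : G.Adj u v) (hdeg : ∀ x : V, G.Adj v x → x = u)
    (hwe : w s(u, v) = 0)
    (M : Finset (Sym2 V)) (hM : EdgeMatching G M)
    (hfree : ∀ f ∈ M, u ∉ f ∧ v ∉ f) :
    EdgeMatching G (insert s(u, v) M) ∧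
      ∀ k : ℕ, 1 ≤ k →
        (∃ (a b : V) (p : G.Walk a b), IsWeightAugKPath w (insert s(u, v) M) k p) →
        ∃ (a b : V) (p : G.Walk a b), IsWeightAugKPath w M k p := by
  refine ⟨hM.insert hadj fun f hf x hx => ?_, ?_⟩
  · rcases Sym2.mem_iff.mp hx with rfl | rfl
    exacts [(hfree f hf).1, (hfree f hf).2]
  rintro k - ⟨a, b, p, hp⟩
  by_cases he : s(u, v) ∈ p.edges
  · have hsub : (G.neighborSet v).Subsingleton := fun x hx y hy =>
      (hdeg x hx).trans (hdeg y hy).symm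
    rcases hp.1.1.eq_start_or_eq_end_of_neighborSet_subsingleton
      (p.snd_mem_support_of_mem_edges he) hsub with rfl | rfl
    · exact ⟨_, _, hp.exists_of_insert_pendant hdeg hwe.ge⟩
    · exact ⟨_, _, hp.reverse.exists_of_insert_pendant hdeg hwe.ge⟩
  · refine ⟨a, b, p, (isWeightAugKPath_congr p fun f hf => ?_).mp hp⟩
    rw [Finset.mem_insert, or_iff_right (ne_of_mem_of_not_mem hf he)]

/-- Let `v` be a vertex of degree 1 whose unique incident edge is `e = {u,v}` of
weight `0`, and let `M` be a matching avoiding `e` and covering neither `u` nor `v`.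
Then `M' = M ∪ {e}` is again a matching, and for every `k ≥ 1`, any weight-augmenting
`k`-path with respect to `M'` yields a weight-augmenting `k`-path with respect to `M`. -/
theorem zero_weight_pendant_edge_aug_path {V : Type*} [Fintype V] [DecidableEq V]
    (G : SimpleGraph V) (w : Sym2 V → ℝ) (hw : ∀ e ∈ G.edgeSet, 0 ≤ w e)
    (u v : V) (hadj : G.Adj u v) (hdeg : ∀ x : V, G.Adj v x → x = u)
    (hwe : w s(u, v) = 0)
    (M : Finset (Sym2 V)) (hM : EdgeMatching G M)
    (heM : s(u, v) ∉ M)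
    (hfree : ∀ f ∈ M, u ∉ f ∧ v ∉ f) :
    EdgeMatching G (insert s(u, v) M) ∧
      ∀ k : ℕ, 1 ≤ k →
        (∃ (a b : V) (p : G.Walk a b), IsWeightAugKPath w (insert s(u, v) M) k p) →
        ∃ (a b : V) (p : G.Walk a b), IsWeightAugKPath w M k p :=
  zero_weight_pendant_edge_aug_path_general G w u v hadj hdeg hwe M hM hfree
end

section
/- Let G = (V,E) be a finite simple undirected graph with positive integer edge weights w satisfying L ≤ w(e) ≤ N for all e ∈ E, where L ≥ 1 and N are integers, let ε > 0, and let α ≥ 1. For each integer i with ⌊log_{1+ε} L⌋ ≤ i ≤ ⌊log_{1+ε} N⌋, let E_i = { e ∈ E : w(e) ≥ (1+ε)^i } and let M_i ⊆ E_i be a matching such that α·|M_i| ≥ ν(E_i), where ν(E_i) is the maximum cardinality of a matching contained in E_i. Let M be a matching in G together with a level assignment lvl : M → ℤ such that every f ∈ M satisfies ⌊log_{1+ε} L⌋ ≤ lvl(f) ≤ ⌊log_{1+ε} N⌋ and f ∈ M_{lvl(f)}, and such that for every level i and every edge e ∈ M_i, either e ∈ M or e shares an endpoint with some f ∈ M with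 lvl(f) ≥ i (this holds for the matching produced by taking all edges of the matching at the highest level and then adding matching edges from lower levels in descending level order whenever they are not adjacent to an already added edge). Then for every matching M* of G, 2α(1+ε)·w(M) ≥ w(M*); that is, M is a 2α(1+ε)-approximate maximum weight matching. -/
open Finset

theorem sum_Ioc_sub_pred_eq {G : Type*} [AddCommGroup G] (φ : ℤ → G) {lo l : ℤ} (h : lo ≤ l) :
    ∑ i ∈ Ioc lo l, (φ i - φ (i - 1)) = φ l - φ lo := by
  induction l, h using Int.leInduction with
  | base => simp
  | succ l hl ih =>
    rw [← insert_Ioc_right_eq_Ioc_add_one hl, sum_insert (by simp), ih, add_sub_cancel_right]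
    abel

section LayerCake

variable {ι R : Type*} (lev : ι → ℤ) {S T : Finset ι} {lo hi : ℤ}

theorem sum_comp_eq_card_mul_add_sum_Ioc [CommRing R] (φ : ℤ → R)
    (hS : ∀ e ∈ S, lev e ∈ Icc lo hi) :
    ∑ e ∈ S, φ (lev e) =
      #S * φ lo + ∑ i ∈ Ioc lo hi, (φ i - φ (i - 1)) * #{e ∈ S | i ≤ lev e} := by
  have hpoint : ∀ e ∈ S, φ (lev e) =
      φ lo + ∑ i ∈ Ioc lo hi, if i ≤ lev e then φ i - φ (i - 1) else 0 := by
    intro e he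
    obtain ⟨hlo, hhi⟩ := mem_Icc.mp (hS e he)
    have hIoc : {i ∈ Ioc lo hi | i ≤ lev e} = Ioc lo (lev e) := by
      ext i; simp only [mem_filter, mem_Ioc]; omega
    rw [← sum_filter, hIoc, sum_Ioc_sub_pred_eq φ hlo, add_sub_cancel]
  rw [sum_congr rfl hpoint, sum_add_distrib, sum_const, nsmul_eq_mul, sum_comm]
  congr 1
  refine sum_congr rfl fun i _ => ?_
  rw [← sum_filter, sum_const, nsmul_eq_mul, mul_comm]

theorem sum_comp_le_mul_sum_comp_of_card_filter_le
    [CommRing R] [PartialOrder R] [IsOrderedRing R] {φ : ℤ → R} (hφ : Monotone φ)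
    (hφlo : 0 ≤ φ lo) {c : R}
    (hS : ∀ e ∈ S, lev e ∈ Icc lo hi) (hT : ∀ e ∈ T, lev e ∈ Icc lo hi)
    (hcard : ∀ i ∈ Icc lo hi, (#{e ∈ S | i ≤ lev e} : R) ≤ c * #{e ∈ T | i ≤ lev e}) :
    ∑ e ∈ S, φ (lev e) ≤ c * ∑ e ∈ T, φ (lev e) := by
  rcases lt_or_ge hi lo with hlt | hle
  · have hempty : ∀ U : Finset ι, (∀ e ∈ U, lev e ∈ Icc lo hi) → U = ∅ := fun U hU =>
      eq_empty_of_forall_notMem fun e he => by have := mem_Icc.mp (hU e he); omega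
    simp [hempty S hS, hempty T hT]
  have hbase : (#S : R) ≤ c * #T := by
    have h := hcard lo (left_mem_Icc.mpr hle)
    rwa [filter_true_of_mem fun e he => (mem_Icc.mp (hS e he)).1,
      filter_true_of_mem fun e he => (mem_Icc.mp (hT e he)).1] at h
  rw [sum_comp_eq_card_mul_add_sum_Ioc lev φ hS, sum_comp_eq_card_mul_add_sum_Ioc lev φ hT,
    mul_add, mul_sum]
  refine add_le_add ?_ (sum_le_sum fun i hi_mem => ?_)
  · calc (#S : R) * φ lo ≤ c * #T * φ lo := mul_le_mul_of_nonneg_right hbase hφlo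
      _ = c * (#T * φ lo) := mul_assoc ..
  · have hstep : 0 ≤ φ i - φ (i - 1) := sub_nonneg.mpr (hφ (by omega))
    calc (φ i - φ (i - 1)) * #{e ∈ S | i ≤ lev e}
        ≤ (φ i - φ (i - 1)) * (c * #{e ∈ T | i ≤ lev e}) :=
          mul_le_mul_of_nonneg_left (hcard i (Ioc_subset_Icc_self hi_mem)) hstep
      _ = c * ((φ i - φ (i - 1)) * #{e ∈ T | i ≤ lev e}) := by ring

end LayerCake

theorem zpow_le_iff_le_floor_logb {b x : ℝ} (hb : 1 < b) (hx : 0 < x) (i : ℤ) :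
    b ^ i ≤ x ↔ i ≤ ⌊Real.logb b x⌋ := by
  rw [Int.le_floor, Real.le_logb_iff_rpow_le hb hx, Real.rpow_intCast]

theorem lt_zpow_floor_logb_add_one {b x : ℝ} (hb : 1 < b) (hx : 0 < x) :
    x < b ^ (⌊Real.logb b x⌋ + 1) := by
  rw [← not_le, zpow_le_iff_le_floor_logb hb hx]
  omega

theorem sum_le_mul_sum_of_sum_zpow_floor_logb_le {ι : Type*} {b c : ℝ} (hb : 1 < b)
    (hc : 0 ≤ c) {x : ι → ℝ} {S T : Finset ι} (hS : ∀ e ∈ S, 0 < x e) (hT : ∀ e ∈ T, 0 < x e)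
    (h : ∑ e ∈ S, b ^ ⌊Real.logb b (x e)⌋ ≤ c * ∑ e ∈ T, b ^ ⌊Real.logb b (x e)⌋) :
    ∑ e ∈ S, x e ≤ c * b * ∑ e ∈ T, x e :=
  calc ∑ e ∈ S, x e ≤ ∑ e ∈ S, b * b ^ ⌊Real.logb b (x e)⌋ := sum_le_sum fun e he => by
        rw [← zpow_one_add₀ (by positivity), add_comm]
        exact (lt_zpow_floor_logb_add_one hb (hS e he)).le
    _ = b * ∑ e ∈ S, b ^ ⌊Real.logb b (x e)⌋ := (mul_sum ..).symm
    _ ≤ b * (c * ∑ e ∈ T, b ^ ⌊Real.logb b (x e)⌋) := by gcongr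
    _ ≤ b * (c * ∑ e ∈ T, x e) := by
        gcongr with e he
        exact (zpow_le_iff_le_floor_logb hb (hT e he) _).mpr le_rfl
    _ = c * b * ∑ e ∈ T, x e := by ring

section Matching

variable {V : Type*} [DecidableEq V] {G : SimpleGraph V}

theorem EdgeMatching.subset {M M' : Finset (Sym2 V)} (hM : EdgeMatching G M) (h : M' ⊆ M) :
    EdgeMatching G M' :=
  ⟨fun e he => hM.1 e (h he), fun e he f hf => hM.2 e (h he) f (h hf)⟩

theorem EdgeMatching.card_le_two_mul_card {A F : Finset (Sym2 V)} (hA : EdgeMatching G A)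
    (hmeet : ∀ e ∈ A, ∃ f ∈ F, ∃ x, x ∈ e ∧ x ∈ f) : #A ≤ 2 * #F := by
  calc #A ≤ #(F.biUnion Sym2.toFinset) := by
        refine card_le_card_of_forall_subsingleton (fun e x => x ∈ e) (fun e he => ?_) ?_
        · obtain ⟨f, hf, x, hxe, hxf⟩ := hmeet e he
          exact ⟨x, mem_biUnion.mpr ⟨f, hf, Sym2.mem_toFinset.mpr hxf⟩, hxe⟩
        · rintro x - e ⟨he, hxe⟩ e' ⟨he', hxe'⟩
          by_contra hne
          exact hA.2 e he e' he' hne x ⟨hxe, hxe'⟩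
    _ ≤ #F * 2 := card_biUnion_le_card_mul F _ 2 fun f _ => by
        rw [Sym2.card_toFinset]; split_ifs <;> omega
    _ = 2 * #F := mul_comm ..

theorem EdgeMatching.card_le_two_mul_card_filter {A M : Finset (Sym2 V)}
    (hA : EdgeMatching G A) {lvl lev : Sym2 V → ℤ} {i : ℤ} (hAlev : ∀ e ∈ A, i ≤ lev e)
    (hMlev : ∀ f ∈ M, lvl f ≤ lev f)
    (hcover : ∀ e ∈ A, e ∈ M ∨ ∃ f ∈ M, i ≤ lvl f ∧ ∃ x, x ∈ e ∧ x ∈ f) :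
    #A ≤ 2 * #{f ∈ M | i ≤ lev f} := by
  refine hA.card_le_two_mul_card fun e he => ?_
  rcases hcover e he with heM | ⟨f, hfM, hif, x, hxe, hxf⟩
  · exact ⟨e, mem_filter.mpr ⟨heM, hAlev e he⟩, e.out.1, Sym2.out_fst_mem e, Sym2.out_fst_mem e⟩
  · exact ⟨f, mem_filter.mpr ⟨hfM, hif.trans (hMlev f hfM)⟩, x, hxe, hxf⟩

end Matching

theorem level_merge_approx_general {V : Type*} [DecidableEq V]
    (G : SimpleGraph V) (w : Sym2 V → ℤ) (L N : ℤ) (hL : 1 ≤ L)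
    (hw : ∀ e ∈ G.edgeSet, L ≤ w e ∧ w e ≤ N)
    (ε α : ℝ) (hε : 0 < ε) (hα : 1 ≤ α)
    (lo hi : ℤ) (hlo : lo = ⌊Real.logb (1 + ε) (L : ℝ)⌋)
    (hhi : hi = ⌊Real.logb (1 + ε) (N : ℝ)⌋)
    (Ei : ℤ → Finset (Sym2 V))
    (hEi : ∀ i : ℤ, lo ≤ i → i ≤ hi →
      ∀ e : Sym2 V, e ∈ Ei i ↔ e ∈ G.edgeSet ∧ (1 + ε) ^ i ≤ (w e : ℝ))
    (Mi : ℤ → Finset (Sym2 V))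
    (hMiSub : ∀ i : ℤ, lo ≤ i → i ≤ hi → Mi i ⊆ Ei i)
    (hMiMatch : ∀ i : ℤ, lo ≤ i → i ≤ hi → EdgeMatching G (Mi i))
    (hMiApprox : ∀ i : ℤ, lo ≤ i → i ≤ hi →
      ∀ M' : Finset (Sym2 V), EdgeMatching G M' → M' ⊆ Ei i →
        (M'.card : ℝ) ≤ α * (Mi i).card)
    (M : Finset (Sym2 V)) (hM : EdgeMatching G M)
    (lvl : Sym2 V → ℤ)
    (hlvl : ∀ f ∈ M, lo ≤ lvl f ∧ lvl f ≤ hi ∧ f ∈ Mi (lvl f))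
    (hgreedy : ∀ i : ℤ, lo ≤ i → i ≤ hi → ∀ e ∈ Mi i,
      e ∈ M ∨ ∃ f ∈ M, i ≤ lvl f ∧ ∃ x : V, x ∈ e ∧ x ∈ f)
    (Mstar : Finset (Sym2 V)) (hMstar : EdgeMatching G Mstar) :
    (∑ e ∈ Mstar, (w e : ℝ)) ≤ 2 * α * (1 + ε) * ∑ e ∈ M, (w e : ℝ) := by
  have hb : 1 < 1 + ε := by linarith
  have hLpos : (0 : ℝ) < L := by exact_mod_cast hL
  have hwpos : ∀ e ∈ G.edgeSet, (0 : ℝ) < w e := fun e he =>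
    hLpos.trans_le (by exact_mod_cast (hw e he).1)
  set lev : Sym2 V → ℤ := fun e => ⌊Real.logb (1 + ε) (w e)⌋
  have hlev : ∀ e ∈ G.edgeSet, lev e ∈ Icc lo hi := fun e he => by
    rw [hlo, hhi, mem_Icc]
    exact ⟨Int.floor_mono (Real.logb_le_logb_of_le hb hLpos (by exact_mod_cast (hw e he).1)),
      Int.floor_mono (Real.logb_le_logb_of_le hb (hwpos e he) (by exact_mod_cast (hw e he).2))⟩
  have hEi_lev : ∀ i, lo ≤ i → i ≤ hi → ∀ e ∈ Ei i, i ≤ lev e := by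
    intro i hilo hihi e he
    obtain ⟨heG, hwe⟩ := (hEi i hilo hihi e).mp he
    exact (zpow_le_iff_le_floor_logb hb (hwpos e heG) i).mp hwe
  have hMlev : ∀ f ∈ M, lvl f ≤ lev f := fun f hf => by
    obtain ⟨hflo, hfhi, hfMi⟩ := hlvl f hf
    exact hEi_lev _ hflo hfhi f (hMiSub _ hflo hfhi hfMi)
  have hcount : ∀ i ∈ Icc lo hi,
      (#{e ∈ Mstar | i ≤ lev e} : ℝ) ≤ 2 * α * #{f ∈ M | i ≤ lev f} := by
    intro i hi_mem
    obtain ⟨hilo, hihi⟩ := mem_Icc.mp hi_mem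
    have hsub : {e ∈ Mstar | i ≤ lev e} ⊆ Ei i := fun e he => by
      rw [mem_filter] at he
      rw [hEi i hilo hihi, zpow_le_iff_le_floor_logb hb (hwpos e (hMstar.1 e he.1))]
      exact ⟨hMstar.1 e he.1, he.2⟩
    calc (#{e ∈ Mstar | i ≤ lev e} : ℝ) ≤ α * #(Mi i) :=
          hMiApprox i hilo hihi _ (hMstar.subset (filter_subset ..)) hsub
      _ ≤ α * (2 * #{f ∈ M | i ≤ lev f}) := by
          gcongr
          exact_mod_cast (hMiMatch i hilo hihi).card_le_two_mul_card_filter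
            (fun e he => hEi_lev i hilo hihi e (hMiSub i hilo hihi he)) hMlev
            (hgreedy i hilo hihi)
      _ = 2 * α * #{f ∈ M | i ≤ lev f} := by ring
  refine sum_le_mul_sum_of_sum_zpow_floor_logb_le hb (by linarith)
    (fun e he => hwpos e (hMstar.1 e he)) (fun e he => hwpos e (hM.1 e he)) ?_
  exact sum_comp_le_mul_sum_comp_of_card_filter_le lev (zpow_right_mono₀ hb.le)
    (by positivity) (fun e he => hlev e (hMstar.1 e he)) (fun e he => hlev e (hM.1 e he)) hcount

/-- Stubbs–Williams meta-theorem (static quality guarantee): with integer edge weights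
in `[L, N]`, levels `i` from `⌊log_{1+ε} L⌋` to `⌊log_{1+ε} N⌋`, level edge sets
`E_i = {e ∈ E : w e ≥ (1+ε)^i}` and `α`-approximate maximum cardinality matchings
`M_i ⊆ E_i`, any matching `M` obtained by greedily merging the `M_i` from the top
level downwards is a `2α(1+ε)`-approximate maximum weight matching. -/
theorem level_merge_approx {V : Type*} [Fintype V] [DecidableEq V]
    (G : SimpleGraph V) (w : Sym2 V → ℤ) (L N : ℤ) (hL : 1 ≤ L)
    (hw : ∀ e ∈ G.edgeSet, L ≤ w e ∧ w e ≤ N)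
    (ε α : ℝ) (hε : 0 < ε) (hα : 1 ≤ α)
    (lo hi : ℤ) (hlo : lo = ⌊Real.logb (1 + ε) (L : ℝ)⌋)
    (hhi : hi = ⌊Real.logb (1 + ε) (N : ℝ)⌋)
    (Ei : ℤ → Finset (Sym2 V))
    (hEi : ∀ i : ℤ, lo ≤ i → i ≤ hi →
      ∀ e : Sym2 V, e ∈ Ei i ↔ e ∈ G.edgeSet ∧ (1 + ε) ^ i ≤ (w e : ℝ))
    (Mi : ℤ → Finset (Sym2 V))
    (hMiSub : ∀ i : ℤ, lo ≤ i → i ≤ hi → Mi i ⊆ Ei i)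
    (hMiMatch : ∀ i : ℤ, lo ≤ i → i ≤ hi → EdgeMatching G (Mi i))
    (hMiApprox : ∀ i : ℤ, lo ≤ i → i ≤ hi →
      ∀ M' : Finset (Sym2 V), EdgeMatching G M' → M' ⊆ Ei i →
        (M'.card : ℝ) ≤ α * (Mi i).card)
    (M : Finset (Sym2 V)) (hM : EdgeMatching G M)
    (lvl : Sym2 V → ℤ)
    (hlvl : ∀ f ∈ M, lo ≤ lvl f ∧ lvl f ≤ hi ∧ f ∈ Mi (lvl f))
    (hgreedy : ∀ i : ℤ, lo ≤ i → i ≤ hi → ∀ e ∈ Mi i,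
      e ∈ M ∨ ∃ f ∈ M, i ≤ lvl f ∧ ∃ x : V, x ∈ e ∧ x ∈ f)
    (Mstar : Finset (Sym2 V)) (hMstar : EdgeMatching G Mstar) :
    (∑ e ∈ Mstar, (w e : ℝ)) ≤ 2 * α * (1 + ε) * ∑ e ∈ M, (w e : ℝ) :=
  level_merge_approx_general G w L N hL hw ε α hε hα lo hi hlo hhi Ei hEi Mi hMiSub hMiMatch
    hMiApprox M hM lvl hlvl hgreedy Mstar hMstar
end
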